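/- Let (E, sim, ser) be a comtrace alphabet. A step sequence u is maximally concurrent if and only if u is canonical. -/

import Mathlib

/-!
Let `PullForward` move a nonempty part `C` of a step `B` into the preceding step `A` whenever
`A × C ⊆ ser` and `C × (B \ C) ⊆ ser`, i.e. whenever `C` witnesses `FD A B` (the step disappears
if `C = B`). Each move is a comtrace congruence, it decreases `∑ i, i * |uᵢ|`, and the moves are
locally confluent; by Newman's lemma every congruence class reduces to a unique normal form, and
the normal forms are exactly the canonical step sequences.

Moves never lengthen a sequence and only enlarge its first step. Hence a canonical sequence is
shortest in its class and its first step contains the first step of any congruent sequence, so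
all its suffixes have `mcIdx = 0`: it is maximally concurrent. Conversely, if `FD A B` holds for
adjacent steps of a maximally concurrent `u = p ++ A :: B :: q`, then `A :: B :: q` has the
length of its canonical form (otherwise `u` would not be shortest), but pulling the witness into
`A` shows that `A` is not maximally concurrent, so its `mcIdx` exceeds that of the canonical
form, contradicting condition (2).
-/

variable {E : Type*}

/-- A step over a comtrace alphabet `(E, sim, ser)`: a nonempty finite set of events,
pairwise related by `sim`. -/
def IsStep [DecidableEq E] (sim : E → E → Prop) (A : Finset E) : Prop :=
  A.Nonempty ∧ ∀ a ∈ A, ∀ b ∈ A, a ≠ b → sim a b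

/-- A step sequence: a finite list of steps. -/
def IsStepSeq [DecidableEq E] (sim : E → E → Prop) (u : List (Finset E)) : Prop :=
  ∀ A ∈ u, IsStep sim A

/-- The generating relation of comtrace congruence:
`w·A·z ≈ w·B·C·z` whenever `A`, `B`, `C` are steps with `B ∪ C = A` and `B × C ⊆ ser`. -/
def CTBase [DecidableEq E] (sim ser : E → E → Prop) (u v : List (Finset E)) : Prop :=
  ∃ (w z : List (Finset E)) (A B C : Finset E),
    IsStepSeq sim w ∧ IsStepSeq sim z ∧
    IsStep sim A ∧ IsStep sim B ∧ IsStep sim C ∧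
    B ∪ C = A ∧ (∀ b ∈ B, ∀ c ∈ C, ser b c) ∧
    u = w ++ A :: z ∧ v = w ++ B :: C :: z

/-- The least equivalence relation containing `base`. -/
def LeastEquiv {α : Type*} (base : α → α → Prop) (x y : α) : Prop :=
  ∀ c : α → α → Prop, Equivalence c → (∀ a b, base a b → c a b) → c x y

/-- Comtrace congruence: the least equivalence relation containing `CTBase`. -/
def CTEquiv [DecidableEq E] (sim ser : E → E → Prop) :
    List (Finset E) → List (Finset E) → Prop :=
  LeastEquiv (CTBase sim ser)

/-- Forward dependency on steps: `(A, B) ∈ FD` iff there is a step `C ⊆ B` with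
`A × C ⊆ ser` and `C × (B \ C) ⊆ ser`. -/
def FD [DecidableEq E] (sim ser : E → E → Prop) (A B : Finset E) : Prop :=
  ∃ C : Finset E, IsStep sim C ∧ C ⊆ B ∧
    (∀ a ∈ A, ∀ c ∈ C, ser a c) ∧ (∀ c ∈ C, ∀ b ∈ B \ C, ser c b)

/-- A step sequence `A₁…A_k` is canonical iff `(Aᵢ, Aᵢ₊₁) ∉ FD` for all `1 ≤ i < k`. -/
def Canonical [DecidableEq E] (sim ser : E → E → Prop) (u : List (Finset E)) : Prop :=
  u.Chain' (fun A B => ¬ FD sim ser A B)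

/-- `X_j` is maximally concurrent in `x` (0-indexed): every step sequence `B·y`
congruent to the suffix `x.drop j` satisfies `|B| ≤ |X_j|`. -/
def MaxConcAt [DecidableEq E] (sim ser : E → E → Prop) (x : List (Finset E))
    (j : ℕ) : Prop :=
  ∃ h : j < x.length, ∀ (B : Finset E) (y : List (Finset E)),
    IsStep sim B → IsStepSeq sim y → CTEquiv sim ser (B :: y) (x.drop j) →
    B.card ≤ (x.get ⟨j, h⟩).card

/-- `mcIdx x` is the smallest index `j` such that the `j`-th step is maximally
concurrent in `x`. -/
noncomputable def mcIdx [DecidableEq E] (sim ser : E → E → Prop)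
    (x : List (Finset E)) : ℕ :=
  sInf {j | MaxConcAt sim ser x j}

/-- A step sequence `u` is maximally concurrent iff (1) it has minimal length in its
congruence class, and (2) each suffix of `u` has minimal `mcIdx` among congruent step
sequences of the same length. -/
def MaximallyConcurrent [DecidableEq E] (sim ser : E → E → Prop)
    (u : List (Finset E)) : Prop :=
  (∀ v, IsStepSeq sim v → CTEquiv sim ser u v → u.length ≤ v.length) ∧
  (∀ i < u.length, ∀ w, IsStepSeq sim w → CTEquiv sim ser (u.drop i) w →
    (u.drop i).length = w.length →
    mcIdx sim ser (u.drop i) ≤ mcIdx sim ser w)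

open Relation

theorem leastEquiv_eq_eqvGen {α : Type*} (r : α → α → Prop) : LeastEquiv r = EqvGen r := by
  ext x y
  exact ⟨fun h => h _ (EqvGen.is_equivalence r) fun _ _ => .rel _ _,
    fun h _ hc hr => hc.eqvGen_iff.mp (EqvGen.mono hr _ _ h)⟩

namespace Relation

variable {α : Type*} {r : α → α → Prop}

theorem exists_reflTransGen_normal (hwf : WellFounded (flip r)) (a : α) :
    ∃ b, ReflTransGen r a b ∧ ∀ c, ¬ r b c := by
  induction a using hwf.induction with
  | _ a ih =>
    by_cases h : ∃ b, r a b
    · obtain ⟨b, hab⟩ := h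
      obtain ⟨c, hbc, hc⟩ := ih b hab
      exact ⟨c, hbc.head hab, hc⟩
    · exact ⟨a, .refl, fun c hac => h ⟨c, hac⟩⟩

theorem newman (hwf : WellFounded (flip r))
    (hlc : ∀ a b c, r a b → r a c → Join (ReflTransGen r) b c) (a b c : α)
    (hab : ReflTransGen r a b) (hac : ReflTransGen r a c) : Join (ReflTransGen r) b c := by
  induction a using hwf.induction generalizing b c with
  | _ a ih =>
    rcases hab.cases_head with rfl | ⟨b₁, hab₁, hb₁b⟩
    · exact ⟨c, hac, .refl⟩
    rcases hac.cases_head with rfl | ⟨c₁, hac₁, hc₁c⟩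
    · exact ⟨b, .refl, hab⟩
    obtain ⟨d, hb₁d, hc₁d⟩ := hlc a b₁ c₁ hab₁ hac₁
    obtain ⟨e, hbe, hde⟩ := ih b₁ hab₁ b d hb₁b hb₁d
    obtain ⟨f, hef, hcf⟩ := ih c₁ hac₁ e c (hc₁d.trans hde) hc₁c
    exact ⟨f, hbe.trans hef, hcf⟩

theorem join_of_eqvGen {s : α → α → Prop} (hwf : WellFounded (flip r))
    (hlc : ∀ a b c, r a b → r a c → Join (ReflTransGen r) b c)
    (hs : ∀ a b, s a b → Join (ReflTransGen r) a b) {a b : α} (h : EqvGen s a b) :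
    Join (ReflTransGen r) a b :=
  (equivalence_join (newman hwf hlc)).eqvGen_iff.mp (EqvGen.mono hs _ _ h)

theorem Join.reflTransGen_of_normal {a b : α} (h : Join (ReflTransGen r) a b)
    (hb : ∀ c, ¬ r b c) : ReflTransGen r a b := by
  obtain ⟨c, hac, hbc⟩ := h
  rcases hbc.cases_head with rfl | ⟨d, hbd, -⟩
  · exact hac
  · exact absurd hbd (hb d)

end Relation

section SerProd

variable {ser : E → E → Prop}

/-- `SerProd ser X Y` is the paper's `X × Y ⊆ ser`. -/
def SerProd (ser : E → E → Prop) (X Y : Finset E) : Prop := ∀ a ∈ X, ∀ b ∈ Y, ser a b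

theorem SerProd.mono {X Y X' Y' : Finset E} (h : SerProd ser X Y) (hX : X' ⊆ X)
    (hY : Y' ⊆ Y) : SerProd ser X' Y' :=
  fun a ha b hb => h a (hX ha) b (hY hb)

theorem SerProd.disjoint (hser_irr : ∀ a, ¬ ser a a) {X Y : Finset E} (h : SerProd ser X Y) :
    Disjoint X Y :=
  Finset.disjoint_left.mpr fun a ha ha' => hser_irr a (h a ha a ha')

theorem SerProd.union_left [DecidableEq E] {A C Y : Finset E} (hA : SerProd ser A Y)
    (hC : SerProd ser C Y) : SerProd ser (A ∪ C) Y :=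
  Finset.forall_mem_union.mpr ⟨hA, hC⟩

theorem SerProd.union_right [DecidableEq E] {X B C : Finset E} (hB : SerProd ser X B)
    (hC : SerProd ser X C) : SerProd ser X (B ∪ C) :=
  fun a ha => Finset.forall_mem_union.mpr ⟨hB a ha, hC a ha⟩

end SerProd

section Weight

def weight (u : List (Finset E)) : ℕ := (u.map Finset.card).sum

@[simp] theorem weight_nil : weight ([] : List (Finset E)) = 0 := rfl

@[simp] theorem weight_cons (A : Finset E) (u : List (Finset E)) :
    weight (A :: u) = A.card + weight u := by
  simp [weight]

@[simp] theorem weight_append (u v : List (Finset E)) :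
    weight (u ++ v) = weight u + weight v := by
  simp [weight]

/-- `moment u = ∑ i, i * |uᵢ|`, which every `PullForward` step decreases. -/
def moment : List (Finset E) → ℕ
  | [] => 0
  | _ :: u => weight u + moment u

theorem moment_append (p u : List (Finset E)) :
    moment (p ++ u) = moment p + p.length * weight u + moment u := by
  induction p with
  | nil => simp [moment]
  | cons A p ih => simp only [List.cons_append, moment, weight_append, ih, List.length_cons]; ring

end Weight

section Steps

variable [DecidableEq E] {sim ser : E → E → Prop}

@[simp] theorem isStepSeq_nil : IsStepSeq sim ([] : List (Finset E)) := by
  simp [IsStepSeq]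

@[simp] theorem isStepSeq_cons {A : Finset E} {u : List (Finset E)} :
    IsStepSeq sim (A :: u) ↔ IsStep sim A ∧ IsStepSeq sim u := by
  simp [IsStepSeq]

@[simp] theorem isStepSeq_append {u v : List (Finset E)} :
    IsStepSeq sim (u ++ v) ↔ IsStepSeq sim u ∧ IsStepSeq sim v :=
  List.forall_mem_append

theorem IsStep.of_subset {B C : Finset E} (hB : IsStep sim B) (hC : C.Nonempty)
    (hCB : C ⊆ B) : IsStep sim C :=
  ⟨hC, fun a ha b hb => hB.2 a (hCB ha) b (hCB hb)⟩

theorem IsStep.union (hsim_symm : ∀ a b, sim a b → sim b a)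
    (hser_sub : ∀ a b, ser a b → sim a b) {A C : Finset E} (hA : IsStep sim A)
    (hC : IsStep sim C) (hAC : SerProd ser A C) : IsStep sim (A ∪ C) := by
  refine ⟨hA.1.mono Finset.subset_union_left, fun a ha b hb hab => ?_⟩
  rcases Finset.mem_union.mp ha with ha | ha <;> rcases Finset.mem_union.mp hb with hb | hb
  · exact hA.2 a ha b hb hab
  · exact hser_sub a b (hAC a ha b hb)
  · exact hsim_symm b a (hser_sub b a (hAC b hb a ha))
  · exact hC.2 a ha b hb hab

end Steps

section Congruence

variable [DecidableEq E] {sim ser : E → E → Prop}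

theorem ctEquiv_eq_eqvGen : CTEquiv sim ser = EqvGen (CTBase sim ser) :=
  leastEquiv_eq_eqvGen _

theorem CTEquiv.refl (u : List (Finset E)) : CTEquiv sim ser u u := by
  rw [ctEquiv_eq_eqvGen]; exact .refl u

theorem CTEquiv.symm {u v : List (Finset E)} (h : CTEquiv sim ser u v) :
    CTEquiv sim ser v u := by
  rw [ctEquiv_eq_eqvGen] at h ⊢; exact h.symm

theorem CTEquiv.trans {u v w : List (Finset E)} (h₁ : CTEquiv sim ser u v)
    (h₂ : CTEquiv sim ser v w) : CTEquiv sim ser u w := by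
  rw [ctEquiv_eq_eqvGen] at h₁ h₂ ⊢; exact h₁.trans _ _ _ h₂

theorem CTEquiv.split (hsim_symm : ∀ a b, sim a b → sim b a)
    (hser_sub : ∀ a b, ser a b → sim a b) {w z : List (Finset E)} {B C : Finset E}
    (hw : IsStepSeq sim w) (hz : IsStepSeq sim z) (hB : IsStep sim B) (hC : IsStep sim C)
    (hBC : SerProd ser B C) : CTEquiv sim ser (w ++ (B ∪ C) :: z) (w ++ B :: C :: z) := by
  rw [ctEquiv_eq_eqvGen]
  exact .rel _ _ ⟨w, z, B ∪ C, B, C, hw, hz, hB.union hsim_symm hser_sub hC hBC, hB, hC,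
    rfl, hBC, rfl, rfl⟩

theorem CTEquiv.append_left {p u v : List (Finset E)} (hp : IsStepSeq sim p)
    (h : CTEquiv sim ser u v) : CTEquiv sim ser (p ++ u) (p ++ v) := by
  rw [ctEquiv_eq_eqvGen] at h ⊢
  induction h with
  | rel _ _ h =>
    obtain ⟨w, z, A, B, C, hw, hz, hA, hB, hC, hunion, hBC, rfl, rfl⟩ := h
    exact .rel _ _ ⟨p ++ w, z, A, B, C, isStepSeq_append.mpr ⟨hp, hw⟩, hz, hA, hB, hC,
      hunion, hBC, by simp, by simp⟩
  | refl => exact .refl _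
  | symm _ _ _ ih => exact ih.symm
  | trans _ _ _ _ _ ih₁ ih₂ => exact ih₁.trans _ _ _ ih₂

theorem CTEquiv.weight_eq (hser_irr : ∀ a, ¬ ser a a) {u v : List (Finset E)}
    (h : CTEquiv sim ser u v) : weight u = weight v := by
  rw [ctEquiv_eq_eqvGen] at h
  induction h with
  | rel _ _ h =>
    obtain ⟨w, z, A, B, C, -, -, -, -, -, rfl, hBC, rfl, rfl⟩ := h
    simp only [weight_append, weight_cons,
      Finset.card_union_of_disjoint (SerProd.disjoint hser_irr hBC)]
    ring
  | refl => rfl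
  | symm _ _ _ ih => exact ih.symm
  | trans _ _ _ _ _ ih₁ ih₂ => exact ih₁.trans ih₂

end Congruence

section PullForward

variable [DecidableEq E] {ser : E → E → Prop}

/-- For a step `C`, these are the conditions on the witness `C` of `FD sim ser A B`. -/
def Pullable (ser : E → E → Prop) (A B C : Finset E) : Prop :=
  C.Nonempty ∧ C ⊆ B ∧ SerProd ser A C ∧ SerProd ser C (B \ C)

/-- What is left of `B` once `C ⊆ B` has moved out: nothing if `C = B`. -/
def residue (B C : Finset E) : List (Finset E) := if B = C then [] else [B \ C]

@[simp] theorem residue_self (B : Finset E) : residue B B = [] := if_pos rfl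

theorem residue_of_ne {B C : Finset E} (h : B ≠ C) : residue B C = [B \ C] := if_neg h

theorem residue_sdiff_sdiff {B C₁ C₂ : Finset E} (h₁ : C₁ ⊆ B) (h₂ : C₂ ⊆ B) :
    residue (B \ C₁) (C₂ \ C₁) = residue B (C₁ ∪ C₂) := by
  have hiff : B \ C₁ = C₂ \ C₁ ↔ B = C₁ ∪ C₂ := by
    simp only [Finset.ext_iff, Finset.mem_sdiff, Finset.mem_union, Finset.subset_iff] at *
    grind
  have hsdiff : (B \ C₁) \ (C₂ \ C₁) = B \ (C₁ ∪ C₂) := by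
    ext x
    simp only [Finset.mem_sdiff, Finset.mem_union]
    tauto
  unfold residue
  by_cases hB : B = C₁ ∪ C₂
  · rw [if_pos (hiff.mpr hB), if_pos hB]
  · rw [if_neg (mt hiff.mp hB), if_neg hB, hsdiff]

theorem IsStep.isStepSeq_residue {sim : E → E → Prop} {B C : Finset E} (hB : IsStep sim B)
    (hCB : C ⊆ B) : IsStepSeq sim (residue B C) := by
  unfold residue
  split_ifs with hBC
  · exact isStepSeq_nil
  · exact isStepSeq_cons.mpr ⟨hB.of_subset (Finset.sdiff_nonempty.mpr fun h => hBC
      (subset_antisymm h hCB)) Finset.sdiff_subset, isStepSeq_nil⟩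

theorem weight_residue {B C : Finset E} (h : C ⊆ B) :
    weight (residue B C) = B.card - C.card := by
  unfold residue
  split_ifs with hBC
  · simp [hBC]
  · simp [Finset.card_sdiff_of_subset h]

def PullForward (ser : E → E → Prop) (u v : List (Finset E)) : Prop :=
  ∃ (p q : List (Finset E)) (A B C : Finset E), Pullable ser A B C ∧
    u = p ++ A :: B :: q ∧ v = p ++ (A ∪ C) :: (residue B C ++ q)

theorem Pullable.pullForward {A B C : Finset E} (h : Pullable ser A B C)
    (p q : List (Finset E)) :
    PullForward ser (p ++ A :: B :: q) (p ++ (A ∪ C) :: (residue B C ++ q)) :=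
  ⟨p, q, A, B, C, h, rfl, rfl⟩

theorem PullForward.moment_lt (hser_irr : ∀ a, ¬ ser a a) {u v : List (Finset E)}
    (h : PullForward ser u v) : moment v < moment u := by
  obtain ⟨p, q, A, B, C, ⟨hC, hCB, hAC, -⟩, rfl, rfl⟩ := h
  have hcard : (A ∪ C).card = A.card + C.card :=
    Finset.card_union_of_disjoint (SerProd.disjoint hser_irr hAC)
  have hCpos : 0 < C.card := hC.card_pos
  have hCB' : C.card ≤ B.card := Finset.card_le_card hCB
  have hres : moment (residue B C ++ q) ≤ weight q + moment q := by
    unfold residue; split_ifs <;> simp [moment]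
  have hweight : weight ((A ∪ C) :: (residue B C ++ q)) = weight (A :: B :: q) := by
    simp only [weight_cons, weight_append, weight_residue hCB, hcard]
    omega
  rw [moment_append, moment_append, hweight]
  simp only [moment, weight_cons, weight_append, weight_residue hCB]
  omega

theorem PullForward.length_le {u v : List (Finset E)} (h : PullForward ser u v) :
    v.length ≤ u.length := by
  obtain ⟨p, q, A, B, C, -, rfl, rfl⟩ := h
  unfold residue
  split_ifs <;> simp

theorem PullForward.head_subset {X : Finset E} {u v : List (Finset E)}
    (h : PullForward ser (X :: u) v) : ∃ Y w, v = Y :: w ∧ X ⊆ Y := by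
  obtain ⟨p, q, A, B, C, -, hu, rfl⟩ := h
  cases p with
  | nil =>
    obtain ⟨rfl, -⟩ := List.cons.inj hu
    exact ⟨X ∪ C, _, rfl, Finset.subset_union_left⟩
  | cons Z p =>
    obtain ⟨rfl, -⟩ := List.cons.inj hu
    exact ⟨X, _, rfl, subset_rfl⟩

theorem length_le_of_reflTransGen_pullForward {u v : List (Finset E)}
    (h : ReflTransGen (PullForward ser) u v) : v.length ≤ u.length := by
  induction h with
  | refl => rfl
  | tail _ hvw ih => exact hvw.length_le.trans ih

theorem head_subset_of_reflTransGen_pullForward {X : Finset E} {u v : List (Finset E)}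
    (h : ReflTransGen (PullForward ser) (X :: u) v) : ∃ Y w, v = Y :: w ∧ X ⊆ Y := by
  induction h with
  | refl => exact ⟨X, u, rfl, subset_rfl⟩
  | tail _ hvw ih =>
    obtain ⟨Y, w, rfl, hXY⟩ := ih
    obtain ⟨Z, w', rfl, hYZ⟩ := hvw.head_subset
    exact ⟨Z, w', rfl, hXY.trans hYZ⟩

theorem pullForward_wellFounded (hser_irr : ∀ a, ¬ ser a a) :
    WellFounded (flip (PullForward ser)) :=
  Subrelation.wf (fun h => h.moment_lt hser_irr) (measure moment).wf

end PullForward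

section LocalConfluence

variable [DecidableEq E] {ser : E → E → Prop}

theorem pullable_self {X Y : Finset E} (hY : Y.Nonempty) (hXY : SerProd ser X Y) :
    Pullable ser X Y Y :=
  ⟨hY, subset_rfl, hXY, by simp [SerProd]⟩

theorem reflTransGen_pullForward_union {A B C₁ C₂ : Finset E} (h₁ : Pullable ser A B C₁)
    (h₂ : Pullable ser A B C₂) (p q : List (Finset E)) :
    ReflTransGen (PullForward ser) (p ++ (A ∪ C₁) :: (residue B C₁ ++ q))
      (p ++ (A ∪ (C₁ ∪ C₂)) :: (residue B (C₁ ∪ C₂) ++ q)) := by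
  obtain ⟨-, hC₁B, -, hC₁rest⟩ := h₁
  obtain ⟨-, hC₂B, hAC₂, hC₂rest⟩ := h₂
  by_cases hsub : C₂ ⊆ C₁
  · rw [Finset.union_eq_left.mpr hsub]
  have hB : B ≠ C₁ := by rintro rfl; exact hsub hC₂B
  have hpull : Pullable ser (A ∪ C₁) (B \ C₁) (C₂ \ C₁) := by
    refine ⟨Finset.sdiff_nonempty.mpr hsub, Finset.sdiff_subset_sdiff hC₂B subset_rfl,
      SerProd.union_left (hAC₂.mono subset_rfl Finset.sdiff_subset)
        (hC₁rest.mono subset_rfl (Finset.sdiff_subset_sdiff hC₂B subset_rfl)),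
      hC₂rest.mono Finset.sdiff_subset fun x => ?_⟩
    simp only [Finset.mem_sdiff]
    tauto
  have := hpull.pullForward p q
  rw [residue_sdiff_sdiff hC₁B hC₂B, Finset.union_assoc, Finset.union_sdiff_self_eq_union]
    at this
  rw [residue_of_ne hB, List.singleton_append]
  exact .single this

theorem join_pullForward_adjacent (hser_irr : ∀ a, ¬ ser a a) {A B D C₁ C₂ : Finset E}
    (h₁ : Pullable ser A B C₁) (h₂ : Pullable ser B D C₂) (p q : List (Finset E)) :
    Join (ReflTransGen (PullForward ser)) (p ++ (A ∪ C₁) :: (residue B C₁ ++ D :: q))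
      (p ++ A :: (B ∪ C₂) :: (residue D C₂ ++ q)) := by
  obtain ⟨hC₁, hC₁B, hAC₁, hC₁rest⟩ := h₁
  obtain ⟨hC₂, hC₂D, hBC₂, hC₂rest⟩ := h₂
  have hdisj : Disjoint B C₂ := SerProd.disjoint hser_irr hBC₂
  obtain ⟨x, hx⟩ := id hC₂
  have hxB : x ∉ B := Finset.disjoint_right.mp hdisj hx
  rcases eq_or_ne B C₁ with rfl | hB
  · -- The right side pulls all of `B` into `A`, then `D \ C₂` back into `C₂`.
    have hres : residue (B ∪ C₂) B = [C₂] := by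
      rw [residue_of_ne, Finset.union_sdiff_cancel_left hdisj]
      exact fun h => hxB (h ▸ Finset.mem_union_right B hx)
    have step₁ := (show Pullable ser A (B ∪ C₂) B from ⟨hC₁, Finset.subset_union_left, hAC₁,
      by rwa [Finset.union_sdiff_cancel_left hdisj]⟩).pullForward p (residue D C₂ ++ q)
    rw [hres, List.singleton_append] at step₁
    refine ⟨p ++ (A ∪ B) :: D :: q, by rw [residue_self, List.nil_append], .head step₁ ?_⟩
    rcases eq_or_ne D C₂ with rfl | hD
    · rw [residue_self, List.nil_append]
    · have step₂ := (pullable_self (Finset.sdiff_nonempty.mpr fun h => hD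
        (subset_antisymm h hC₂D)) hC₂rest).pullForward (p ++ [A ∪ B]) q
      rw [Finset.union_sdiff_of_subset hC₂D, residue_self] at step₂
      rw [residue_of_ne hD]
      simpa using ReflTransGen.single step₂
  · -- Both sides reach `p ++ (A ∪ C₁) :: ((B \ C₁) ∪ C₂) :: (residue D C₂ ++ q)`.
    have hC₁C₂ : Disjoint C₁ C₂ := hdisj.mono_left hC₁B
    have step₁ := (show Pullable ser (B \ C₁) D C₂ from ⟨hC₂, hC₂D,
      hBC₂.mono Finset.sdiff_subset subset_rfl, hC₂rest⟩).pullForward (p ++ [A ∪ C₁]) q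
    have hsplit : (B ∪ C₂) \ C₁ = (B \ C₁) ∪ C₂ := by
      rw [Finset.union_sdiff_distrib, Finset.sdiff_eq_self_of_disjoint hC₁C₂.symm]
    have step₂ := (show Pullable ser A (B ∪ C₂) C₁ from ⟨hC₁,
      hC₁B.trans Finset.subset_union_left, hAC₁, hsplit ▸
        hC₁rest.union_right (hBC₂.mono hC₁B subset_rfl)⟩).pullForward p (residue D C₂ ++ q)
    have hne : B ∪ C₂ ≠ C₁ := fun h => hxB (hC₁B (h ▸ Finset.mem_union_right B hx))
    rw [residue_of_ne hne, hsplit, List.singleton_append] at step₂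
    rw [residue_of_ne hB]
    exact ⟨_, .single (by simpa using step₁), .single step₂⟩

theorem join_pullForward_of_eq (hser_irr : ∀ a, ¬ ser a a) {p a q₁ q₂ : List (Finset E)}
    {A₁ B₁ C₁ A₂ B₂ C₂ : Finset E} (h₁ : Pullable ser A₁ B₁ C₁) (h₂ : Pullable ser A₂ B₂ C₂)
    (h : A₁ :: B₁ :: q₁ = a ++ A₂ :: B₂ :: q₂) :
    Join (ReflTransGen (PullForward ser)) (p ++ (A₁ ∪ C₁) :: (residue B₁ C₁ ++ q₁))
      (p ++ a ++ (A₂ ∪ C₂) :: (residue B₂ C₂ ++ q₂)) := by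
  match a, h with
  | [], h =>
    obtain ⟨rfl, rfl, rfl⟩ : A₁ = A₂ ∧ B₁ = B₂ ∧ q₁ = q₂ := by simpa using h
    refine ⟨_, reflTransGen_pullForward_union h₁ h₂ p q₁, ?_⟩
    simpa [Finset.union_comm C₁ C₂] using reflTransGen_pullForward_union h₂ h₁ p q₁
  | [X], h =>
    obtain ⟨rfl, rfl, rfl⟩ : X = A₁ ∧ B₁ = A₂ ∧ q₁ = B₂ :: q₂ := by simpa [eq_comm] using h
    simpa using join_pullForward_adjacent hser_irr h₁ h₂ p q₂
  | X :: Y :: r, h =>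
    obtain ⟨rfl, rfl, rfl⟩ : X = A₁ ∧ Y = B₁ ∧ q₁ = r ++ A₂ :: B₂ :: q₂ := by
      simpa [eq_comm] using h
    refine ⟨p ++ (X ∪ C₁) :: (residue Y C₁ ++ r ++ (A₂ ∪ C₂) :: (residue B₂ C₂ ++ q₂)),
      .single ?_, .single ?_⟩
    · simpa using h₂.pullForward (p ++ (X ∪ C₁) :: (residue Y C₁ ++ r)) q₂
    · simpa using h₁.pullForward p (r ++ (A₂ ∪ C₂) :: (residue B₂ C₂ ++ q₂))

theorem pullForward_locallyConfluent (hser_irr : ∀ a, ¬ ser a a) (u v₁ v₂ : List (Finset E))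
    (h₁ : PullForward ser u v₁) (h₂ : PullForward ser u v₂) :
    Join (ReflTransGen (PullForward ser)) v₁ v₂ := by
  obtain ⟨p₁, q₁, A₁, B₁, C₁, hp₁, rfl, rfl⟩ := h₁
  obtain ⟨p₂, q₂, A₂, B₂, C₂, hp₂, hu, rfl⟩ := h₂
  rcases List.append_eq_append_iff.mp hu with ⟨a, rfl, h⟩ | ⟨b, rfl, h⟩
  · exact join_pullForward_of_eq hser_irr hp₁ hp₂ h
  · obtain ⟨d, h₂d, h₁d⟩ := join_pullForward_of_eq hser_irr hp₂ hp₁ h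
    exact ⟨d, h₁d, h₂d⟩

end LocalConfluence

section Canonical

variable [DecidableEq E] {sim ser : E → E → Prop}

theorem CTEquiv.join (hser_irr : ∀ a, ¬ ser a a) {u v : List (Finset E)}
    (h : CTEquiv sim ser u v) : Join (ReflTransGen (PullForward ser)) u v := by
  rw [ctEquiv_eq_eqvGen] at h
  refine join_of_eqvGen (pullForward_wellFounded hser_irr) (pullForward_locallyConfluent hser_irr)
    ?_ h
  rintro _ _ ⟨w, z, -, B, C, -, -, -, -, hC, rfl, hBC, rfl, rfl⟩
  exact ⟨_, .refl, .single (by simpa using (pullable_self hC.1 hBC).pullForward w z)⟩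

theorem PullForward.isStepSeq (hsim_symm : ∀ a b, sim a b → sim b a)
    (hser_sub : ∀ a b, ser a b → sim a b) {u v : List (Finset E)}
    (h : PullForward ser u v) (hu : IsStepSeq sim u) : IsStepSeq sim v := by
  obtain ⟨p, q, A, B, C, ⟨hC, hCB, hAC, -⟩, rfl, rfl⟩ := h
  simp only [isStepSeq_append, isStepSeq_cons] at hu ⊢
  obtain ⟨hp, hA, hB, hq⟩ := hu
  exact ⟨hp, hA.union hsim_symm hser_sub (hB.of_subset hC hCB) hAC,
    hB.isStepSeq_residue hCB, hq⟩

theorem PullForward.ctEquiv (hsim_symm : ∀ a b, sim a b → sim b a)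
    (hser_sub : ∀ a b, ser a b → sim a b) {u v : List (Finset E)}
    (h : PullForward ser u v) (hu : IsStepSeq sim u) : CTEquiv sim ser u v := by
  obtain ⟨p, q, A, B, C, ⟨hC, hCB, hAC, hrest⟩, rfl, rfl⟩ := h
  simp only [isStepSeq_append, isStepSeq_cons] at hu
  obtain ⟨hp, hA, hB, hq⟩ := hu
  have hres := hB.isStepSeq_residue hCB
  have hC' : IsStep sim C := hB.of_subset hC hCB
  have hsplit := CTEquiv.split hsim_symm hser_sub hp (isStepSeq_append.mpr ⟨hres, hq⟩)
    hA hC' hAC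
  rcases eq_or_ne B C with rfl | hBC
  · simpa using hsplit.symm
  · rw [residue_of_ne hBC] at hsplit hres ⊢
    have hmerge := CTEquiv.split hsim_symm hser_sub (w := p ++ [A])
      (isStepSeq_append.mpr ⟨hp, by simpa⟩) hq hC' (by simpa using hres) hrest
    rw [Finset.union_sdiff_of_subset hCB] at hmerge
    simp only [List.append_assoc, List.cons_append] at hmerge hsplit ⊢
    exact hmerge.trans hsplit.symm

theorem ctEquiv_of_reflTransGen_pullForward (hsim_symm : ∀ a b, sim a b → sim b a)
    (hser_sub : ∀ a b, ser a b → sim a b) {u v : List (Finset E)}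
    (h : ReflTransGen (PullForward ser) u v) (hu : IsStepSeq sim u) :
    CTEquiv sim ser u v ∧ IsStepSeq sim v := by
  induction h with
  | refl => exact ⟨.refl u, hu⟩
  | tail _ hvw ih =>
    exact ⟨ih.1.trans (hvw.ctEquiv hsim_symm hser_sub ih.2),
      hvw.isStepSeq hsim_symm hser_sub ih.2⟩

theorem canonical_of_forall_not_pullForward {u : List (Finset E)} (h : ∀ v, ¬ PullForward ser u v) :
    Canonical sim ser u :=
  List.isChain_iff_forall_rel_of_append_cons_cons.mpr fun _ _ p q hu ⟨_, hC, hCB, hAC, hrest⟩ =>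
    h _ (hu ▸ Pullable.pullForward ⟨hC.1, hCB, hAC, hrest⟩ p q)

theorem Canonical.not_pullForward {u : List (Finset E)} (hu : IsStepSeq sim u)
    (hc : Canonical sim ser u) (v : List (Finset E)) : ¬ PullForward ser u v := by
  rintro ⟨p, q, A, B, C, ⟨hC, hCB, hAC, hrest⟩, rfl, -⟩
  have hB : IsStep sim B := by simp_all
  exact List.isChain_iff_forall_rel_of_append_cons_cons.mp hc rfl
    ⟨C, hB.of_subset hC hCB, hCB, hAC, hrest⟩

theorem exists_canonical_ctEquiv (hser_irr : ∀ a, ¬ ser a a)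
    (hsim_symm : ∀ a b, sim a b → sim b a) (hser_sub : ∀ a b, ser a b → sim a b)
    {u : List (Finset E)} (hu : IsStepSeq sim u) :
    ∃ c, IsStepSeq sim c ∧ Canonical sim ser c ∧ CTEquiv sim ser u c := by
  obtain ⟨c, huc, hc⟩ := exists_reflTransGen_normal (pullForward_wellFounded hser_irr) u
  obtain ⟨hequiv, hcs⟩ := ctEquiv_of_reflTransGen_pullForward hsim_symm hser_sub huc hu
  exact ⟨c, hcs, canonical_of_forall_not_pullForward hc, hequiv⟩

theorem Canonical.reflTransGen_of_ctEquiv (hser_irr : ∀ a, ¬ ser a a) {u v : List (Finset E)}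
    (hu : IsStepSeq sim u) (hc : Canonical sim ser u) (h : CTEquiv sim ser v u) :
    ReflTransGen (PullForward ser) v u :=
  (h.join hser_irr).reflTransGen_of_normal (hc.not_pullForward hu)

theorem Canonical.length_le (hser_irr : ∀ a, ¬ ser a a) {u v : List (Finset E)}
    (hu : IsStepSeq sim u) (hc : Canonical sim ser u) (h : CTEquiv sim ser v u) :
    u.length ≤ v.length :=
  length_le_of_reflTransGen_pullForward (hc.reflTransGen_of_ctEquiv hser_irr hu h)

theorem Canonical.head_subset (hser_irr : ∀ a, ¬ ser a a) {X B : Finset E}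
    {u v : List (Finset E)} (hu : IsStepSeq sim (X :: u)) (hc : Canonical sim ser (X :: u))
    (h : CTEquiv sim ser (B :: v) (X :: u)) : B ⊆ X := by
  obtain ⟨Y, w, hY, hBY⟩ :=
    head_subset_of_reflTransGen_pullForward (hc.reflTransGen_of_ctEquiv hser_irr hu h)
  obtain ⟨rfl, -⟩ := List.cons.inj hY
  exact hBY

end Canonical

section MaximallyConcurrent

variable [DecidableEq E] {sim ser : E → E → Prop}

theorem maxConcAt_length_sub_one (hser_irr : ∀ a, ¬ ser a a) {u : List (Finset E)}
    (hu : u ≠ []) : MaxConcAt sim ser u (u.length - 1) := by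
  obtain ⟨l, X, rfl⟩ := (List.eq_nil_or_concat u).resolve_left hu
  refine ⟨by simp, fun B y _ _ h => ?_⟩
  have hweight := h.weight_eq hser_irr
  simp only [List.concat_eq_append, List.length_append, List.length_singleton,
    add_tsub_cancel_right, List.drop_left', weight_cons, weight_nil, List.get_eq_getElem,
    List.getElem_concat_length] at hweight ⊢
  omega

theorem Canonical.mcIdx_eq_zero (hser_irr : ∀ a, ¬ ser a a) {u : List (Finset E)}
    (hu : IsStepSeq sim u) (hc : Canonical sim ser u) (hne : u ≠ []) :
    mcIdx sim ser u = 0 := by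
  obtain ⟨X, u, rfl⟩ := List.exists_cons_of_ne_nil hne
  exact Nat.sInf_eq_zero.mpr <| Or.inl ⟨by simp, fun B y _ _ h =>
    Finset.card_le_card (hc.head_subset hser_irr hu h)⟩

theorem mcIdx_ne_zero_of_fd (hser_irr : ∀ a, ¬ ser a a) (hsim_symm : ∀ a b, sim a b → sim b a)
    (hser_sub : ∀ a b, ser a b → sim a b) {A B : Finset E} {q : List (Finset E)}
    (hu : IsStepSeq sim (A :: B :: q)) (hAB : FD sim ser A B) :
    mcIdx sim ser (A :: B :: q) ≠ 0 := by
  obtain ⟨C, hC, hCB, hAC, hrest⟩ := hAB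
  have hpull := (Pullable.pullForward ⟨hC.1, hCB, hAC, hrest⟩ [] q : PullForward ser _ _)
  have hv := hpull.isStepSeq hsim_symm hser_sub hu
  -- `sInf ∅ = 0`, so some index must be shown to be maximally concurrent.
  rw [mcIdx, Ne, Nat.sInf_eq_zero, not_or]
  refine ⟨fun ⟨_, hmax⟩ => ?_, Set.nonempty_iff_ne_empty.mp
    ⟨_, maxConcAt_length_sub_one hser_irr (List.cons_ne_nil _ _)⟩⟩
  have hcard := hmax _ _ (isStepSeq_cons.mp hv).1 (isStepSeq_cons.mp hv).2
    (hpull.ctEquiv hsim_symm hser_sub hu).symm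
  rw [List.get, Finset.card_union_of_disjoint (SerProd.disjoint hser_irr hAC)] at hcard
  have := hC.1.card_pos
  omega

theorem Canonical.maximallyConcurrent (hser_irr : ∀ a, ¬ ser a a) {u : List (Finset E)}
    (hu : IsStepSeq sim u) (hc : Canonical sim ser u) : MaximallyConcurrent sim ser u := by
  refine ⟨fun v _ h => hc.length_le hser_irr hu h.symm, fun i hi w _ _ _ => ?_⟩
  have hne : u.drop i ≠ [] := by simpa [List.drop_eq_nil_iff] using hi
  rw [Canonical.mcIdx_eq_zero hser_irr (fun X hX => hu X (List.mem_of_mem_drop hX))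
    (List.IsChain.drop hc i) hne]
  exact Nat.zero_le _

theorem MaximallyConcurrent.canonical (hser_irr : ∀ a, ¬ ser a a)
    (hsim_symm : ∀ a b, sim a b → sim b a) (hser_sub : ∀ a b, ser a b → sim a b)
    {u : List (Finset E)} (hu : IsStepSeq sim u) (h : MaximallyConcurrent sim ser u) :
    Canonical sim ser u := by
  refine List.isChain_iff_forall_rel_of_append_cons_cons.mpr fun A B p q hpq hAB => ?_
  subst hpq
  obtain ⟨hp, hs⟩ := isStepSeq_append.mp hu
  obtain ⟨c, hc, hcan, hsc⟩ := exists_canonical_ctEquiv hser_irr hsim_symm hser_sub hs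
  have hlen : c.length = (A :: B :: q).length := by
    refine le_antisymm (hcan.length_le hser_irr hc hsc) ?_
    simpa using h.1 (p ++ c) (isStepSeq_append.mpr ⟨hp, hc⟩) (hsc.append_left hp)
  have hmc := h.2 p.length (by simp) c hc (by simpa using hsc) (by simpa using hlen.symm)
  rw [List.drop_left, hcan.mcIdx_eq_zero hser_irr hc (List.ne_nil_of_length_pos (by simp [hlen]))]
    at hmc
  exact mcIdx_ne_zero_of_fd hser_irr hsim_symm hser_sub hs hAB (Nat.le_zero.mp hmc)

end MaximallyConcurrent

theorem stmt10_general [DecidableEq E] (sim ser : E → E → Prop)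
    (hsim_irr : ∀ a, ¬ sim a a) (hsim_symm : ∀ a b, sim a b → sim b a)
    (hser_sub : ∀ a b, ser a b → sim a b)
    (u : List (Finset E)) (hu : IsStepSeq sim u) :
    MaximallyConcurrent sim ser u ↔ Canonical sim ser u := by
  have hser_irr : ∀ a, ¬ ser a a := fun a h => hsim_irr a (hser_sub a a h)
  exact ⟨fun h => h.canonical hser_irr hsim_symm hser_sub hu,
    fun h => h.maximallyConcurrent hser_irr hu⟩

/-- A step sequence is maximally concurrent iff it is canonical. -/
theorem stmt10 [DecidableEq E] [Fintype E] (sim ser : E → E → Prop)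
    (hsim_irr : ∀ a, ¬ sim a a) (hsim_symm : ∀ a b, sim a b → sim b a)
    (hser_sub : ∀ a b, ser a b → sim a b)
    (u : List (Finset E)) (hu : IsStepSeq sim u) :
    MaximallyConcurrent sim ser u ↔ Canonical sim ser u :=
  stmt10_general sim ser hsim_irr hsim_symm hser_sub u hu
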